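/- arXiv:2503.19088 — 2 statements merged into one kernel-verified Lean document; each statement's English description precedes it below -/
import Mathlib

section
/- Let G be a simple graph, u ∈ V(G), and w ∈ V(G) ∖ [u]_E. Then w is timid in G if and only if w (viewed as a vertex of the quotient) is timid in G/[u]_E. -/
open SimpleGraph

/-- A ray in a simple graph: an injective sequence of successively adjacent vertices. -/
structure GraphRay {V : Type*} (G : SimpleGraph V) where
  toFun : ℕ → V
  injective : Function.Injective toFun
  adj : ∀ n, G.Adj (toFun n) (toFun (n + 1))

/-- `u` and `v` are connected by a walk of `G` avoiding the vertex set `F`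
(i.e. they lie in the same connected component of `G − F`). -/
def ReachAvoiding {V : Type*} (G : SimpleGraph V) (F : Set V) (u v : V) : Prop :=
  ∃ w : G.Walk u v, ∀ x ∈ w.support, x ∉ F

/-- `r` and `r'` have tails lying in the same connected component of `G − F`
(deletion of the vertex set `F`). -/
def TailsConnected {V : Type*} (G : SimpleGraph V) (F : Set V) (r r' : ℕ → V) : Prop :=
  ∃ k k', (∀ n, k ≤ n → r n ∉ F) ∧ (∀ n, k' ≤ n → r' n ∉ F) ∧
    ReachAvoiding G F (r k) (r' k')

/-- `r` and `r'` have tails lying in the same connected component of `G − F`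
(deletion of the edge set `F`). -/
def EdgeTailsConnected {V : Type*} (G : SimpleGraph V) (F : Set (Sym2 V)) (r r' : ℕ → V) : Prop :=
  ∃ k k', (∀ n, k ≤ n → s(r n, r (n + 1)) ∉ F) ∧ (∀ n, k' ≤ n → s(r' n, r' (n + 1)) ∉ F) ∧
    (G.deleteEdges F).Reachable (r k) (r' k')

/-- `v` dominates the ray `r`: for every finite vertex set `F` not containing `v`,
`v` and some tail of `r` lie in the same connected component of `G − F`. -/
def Dominates {V : Type*} (G : SimpleGraph V) (v : V) (r : ℕ → V) : Prop :=
  ∀ F : Finset V, v ∉ F →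
    ∃ k, (∀ n, k ≤ n → r n ∉ (F : Set V)) ∧ ReachAvoiding G (F : Set V) v (r k)

/-- A vertex is timid if it dominates no ray. -/
def Timid {V : Type*} (G : SimpleGraph V) (v : V) : Prop :=
  ∀ r : GraphRay G, ¬ Dominates G v r.toFun

/-- `t(G)`, the set of timid vertices of `G`. -/
def timidSet {V : Type*} (G : SimpleGraph V) : Set V := {v | Timid G v}

/-- Edge-equivalence of rays: no finite set of edges of `G` separates their tails. -/
def EdgeEquiv {V : Type*} (G : SimpleGraph V) (r r' : GraphRay G) : Prop :=
  ∀ F : Finset (Sym2 V), (F : Set (Sym2 V)) ⊆ G.edgeSet →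
    EdgeTailsConnected G (F : Set (Sym2 V)) r.toFun r'.toFun

/-- `U`-equivalence of rays: no finite subset of `U` separates their tails. -/
def UEquiv {V : Type*} (G : SimpleGraph V) (U : Set V) (r r' : GraphRay G) : Prop :=
  ∀ F : Finset V, (F : Set V) ⊆ U → TailsConnected G (F : Set V) r.toFun r'.toFun

/-- The `U`-end space: the quotient of the rays of `G` by `U`-equivalence. -/
def OmegaU {V : Type*} (G : SimpleGraph V) (U : Set V) := Quot (UEquiv G U)

/-- The basic open subset `Ω_U(F, ε)` of the `U`-end space. -/
def uBasic {V : Type*} (G : SimpleGraph V) (U : Set V) (F : Finset V) (ε : OmegaU G U) :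
    Set (OmegaU G U) :=
  {ξ | ∃ r r' : GraphRay G, Quot.mk (UEquiv G U) r = ε ∧ Quot.mk (UEquiv G U) r' = ξ ∧
    TailsConnected G (F : Set V) r.toFun r'.toFun}

instance {V : Type*} (G : SimpleGraph V) (U : Set V) : TopologicalSpace (OmegaU G U) :=
  TopologicalSpace.generateFrom
    {S | ∃ F : Finset V, (F : Set V) ⊆ U ∧ ∃ ε : OmegaU G U, S = uBasic G U F ε}

/-- The edge-end space: the quotient of the rays of `G` by edge-equivalence. -/
def OmegaE {V : Type*} (G : SimpleGraph V) := Quot (EdgeEquiv G)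

/-- The basic open subset `Ω_E(F, ε)` of the edge-end space, for a finite edge set `F`. -/
def eBasic {V : Type*} (G : SimpleGraph V) (F : Finset (Sym2 V)) (ε : OmegaE G) :
    Set (OmegaE G) :=
  {ξ | ∃ r r' : GraphRay G, Quot.mk (EdgeEquiv G) r = ε ∧ Quot.mk (EdgeEquiv G) r' = ξ ∧
    EdgeTailsConnected G (F : Set (Sym2 V)) r.toFun r'.toFun}

instance {V : Type*} (G : SimpleGraph V) : TopologicalSpace (OmegaE G) :=
  TopologicalSpace.generateFrom
    {S | ∃ F : Finset (Sym2 V), (F : Set (Sym2 V)) ⊆ G.edgeSet ∧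
      ∃ ε : OmegaE G, S = eBasic G F ε}
/-- `u ∼_A v`: for every finite set `F ⊆ A` of edges, `u` and `v` lie in the same
connected component of `G − F`. -/
def EdgeSetEquiv {V : Type*} (G : SimpleGraph V) (A : Set (Sym2 V)) (u v : V) : Prop :=
  ∀ F : Finset (Sym2 V), (F : Set (Sym2 V)) ⊆ A → (G.deleteEdges (F : Set (Sym2 V))).Reachable u v

/-- `u ∼_E v`: no finite set of edges of `G` separates `u` from `v`. -/
def VertexEdgeEquiv {V : Type*} (G : SimpleGraph V) (u v : V) : Prop :=
  EdgeSetEquiv G G.edgeSet u v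

/-- `[u]_E`, the `∼_E`-class of `u`. -/
def eClass {V : Type*} (G : SimpleGraph V) (u : V) : Set V := {v | VertexEdgeEquiv G u v}

/-- `E_t(G)`: the set of edges of `G` having at least one timid endpoint. -/
def timidEdges {V : Type*} (G : SimpleGraph V) : Set (Sym2 V) :=
  {e | e ∈ G.edgeSet ∧ ∃ v ∈ e, Timid G v}

/-- The quotient graph `G/[u]_E`: the class `[u]_E` is collapsed to the single
vertex `none`; the remaining vertices keep their adjacencies, and `none` is adjacent
to `w` iff some member of `[u]_E` is adjacent to `w` in `G`. -/
def quotGraph {V : Type*} (G : SimpleGraph V) (u : V) :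
    SimpleGraph (Option {w : V // w ∉ eClass G u}) where
  Adj x y :=
    match x, y with
    | some a, some b => G.Adj a.1 b.1
    | some a, none => ∃ v ∈ eClass G u, G.Adj v a.1
    | none, some b => ∃ v ∈ eClass G u, G.Adj v b.1
    | none, none => False
  symm := by
    constructor
    rintro (_ | a) (_ | b) h
    · exact h
    · exact h
    · exact h
    · exact h.symm
  loopless := by
    constructor
    rintro (_ | a) h
    · exact h
    · exact G.irrefl h

open Classical in
/-- The quotient projection `V(G) → V(G/[u]_E)`. -/
noncomputable def quotProj {V : Type*} (G : SimpleGraph V) (u : V) : V → Option {w : V // w ∉ eClass G u} :=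
  fun v => if h : v ∈ eClass G u then none else some ⟨v, h⟩

/-!
A ray dominated by `w` in `G/[u]_E` eventually avoids the contracted vertex, so a tail of it
lifts to a ray of `G`, and so do the walks witnessing the domination once the contracted
vertex is added to the deleted set. Conversely, since `w ∉ [u]_E`, a finite edge cut `D`
separates `w` from `[u]_E`. A walk from `w` avoiding the endpoints of `D` other than `w`
stays in the component of `w` in `G − D`, hence outside `[u]_E`; so after adding these
finitely many endpoints to the deleted sets, a ray dominated by `w` in `G` and the walks
witnessing it eventually live outside `[u]_E` and project to the quotient.
-/

namespace ReachAvoiding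

variable {V W : Type*} {G : SimpleGraph V} {F F' C : Set V} {a b c : V}

lemma mono (h : ReachAvoiding G F a b) (hF : F' ⊆ F) : ReachAvoiding G F' a b :=
  let ⟨p, hp⟩ := h
  ⟨p, fun x hx hxF => hp x hx (hF hxF)⟩

lemma concat (h : ReachAvoiding G F a b) (hbc : G.Adj b c) (hc : c ∉ F) :
    ReachAvoiding G F a c := by
  obtain ⟨p, hp⟩ := h
  refine ⟨p.concat hbc, fun x hx => ?_⟩
  rw [Walk.support_concat, List.mem_append, List.mem_singleton] at hx
  rcases hx with hx | rfl
  exacts [hp x hx, hc]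

lemma map {H : SimpleGraph W} {F' : Set W} (f : V → W)
    (hadj : ∀ x y, x ∉ F → y ∉ F → G.Adj x y → H.Adj (f x) (f y))
    (hf : ∀ x, x ∉ F → f x ∉ F') (h : ReachAvoiding G F a b) :
    ReachAvoiding H F' (f a) (f b) := by
  obtain ⟨p, hp⟩ := h
  induction p with
  | nil => exact ⟨Walk.nil, by simpa using hf _ (hp _ (by simp))⟩
  | cons hxy p ih =>
    obtain ⟨q, hq⟩ := ih fun x hx => hp x (by simp [hx])
    refine ⟨Walk.cons (hadj _ _ (hp _ (by simp)) (hp _ (by simp)) hxy) q, fun x hx => ?_⟩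
    rw [Walk.support_cons, List.mem_cons] at hx
    rcases hx with rfl | hx
    exacts [hf _ (hp _ (by simp)), hq x hx]

lemma union (h : ReachAvoiding G F a b) (hC : ∀ x, ReachAvoiding G F a x → x ∉ C) :
    ReachAvoiding G (F ∪ C) a b := by
  classical
  obtain ⟨p, hp⟩ := h
  refine ⟨p, fun x hx hxFC => hxFC.elim (hp x hx) (hC x ?_)⟩
  exact ⟨p.takeUntil x hx, fun y hy => hp y (p.support_takeUntil_subset_support hx hy)⟩

lemma reachable_deleteEdges {D : Set (Sym2 V)}
    (h : ReachAvoiding G ({x | ∃ e ∈ D, x ∈ e} \ {a}) a b) :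
    (G.deleteEdges D).Reachable a b := by
  obtain ⟨p, hp⟩ := h
  refine ⟨p.toDeleteEdges D fun e he heD => ?_⟩
  induction e using Sym2.ind with
  | _ x y =>
    have hx := hp x (p.fst_mem_support_of_mem_edges he)
    have hy := hp y (p.snd_mem_support_of_mem_edges he)
    simp only [Set.mem_sdiff, Set.mem_ofPred_eq, Set.mem_singleton_iff, not_and, not_not] at hx hy
    have hxa := hx ⟨_, heD, Sym2.mem_mk_left x y⟩
    have hya := hy ⟨_, heD, Sym2.mem_mk_right x y⟩
    exact (p.adj_of_mem_edges he).ne (hxa.trans hya.symm)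

end ReachAvoiding

namespace GraphRay

variable {V W : Type*} {G : SimpleGraph V} {H : SimpleGraph W}

def shift (r : GraphRay G) (m : ℕ) : GraphRay G where
  toFun n := r.toFun (n + m)
  injective _ _ h := Nat.add_right_cancel (r.injective h)
  adj n := by simpa only [Nat.add_right_comm n 1 m] using r.adj (n + m)

def map (r : GraphRay G) (f : V → W) (hf : Set.InjOn f (Set.range r.toFun))
    (hadj : ∀ n, H.Adj (f (r.toFun n)) (f (r.toFun (n + 1)))) : GraphRay H where
  toFun := f ∘ r.toFun
  injective _ _ h := r.injective (hf (Set.mem_range_self _) (Set.mem_range_self _) h)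
  adj := hadj

lemma reachAvoiding_of_le (r : GraphRay G) {F : Set V} {v : V} {k m : ℕ}
    (h : ReachAvoiding G F v (r.toFun k)) (htail : ∀ n, k ≤ n → r.toFun n ∉ F) (hkm : k ≤ m) :
    ReachAvoiding G F v (r.toFun m) := by
  induction m, hkm using Nat.le_induction with
  | base => exact h
  | succ n hkn ih => exact ih.concat (r.adj n) (htail _ (hkn.trans n.le_succ))

end GraphRay

namespace Dominates

variable {V : Type*} {G : SimpleGraph V} {v : V} {F : Set V}

lemma exists_of_finite {r : ℕ → V} (h : Dominates G v r) (hF : F.Finite) (hv : v ∉ F) :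
    ∃ k, (∀ n, k ≤ n → r n ∉ F) ∧ ReachAvoiding G F v (r k) := by
  simpa using h hF.toFinset (by simpa using hv)

lemma exists_forall_reachAvoiding {r : GraphRay G} (h : Dominates G v r.toFun) (hF : F.Finite)
    (hv : v ∉ F) : ∃ N, ∀ n, N ≤ n → ReachAvoiding G F v (r.toFun n) :=
  let ⟨k, htail, hreach⟩ := h.exists_of_finite hF hv
  ⟨k, fun _ => r.reachAvoiding_of_le hreach htail⟩

lemma shift {r : GraphRay G} (h : Dominates G v r.toFun) (m : ℕ) :
    Dominates G v (r.shift m).toFun := fun F hvF =>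
  let ⟨k, htail, hreach⟩ := h F hvF
  ⟨k, fun n hn => htail _ (hn.trans (Nat.le_add_right n m)),
    r.reachAvoiding_of_le hreach htail (Nat.le_add_right k m)⟩

end Dominates

section quotGraph

variable {V : Type*} {G : SimpleGraph V} {u x : V}

lemma mem_eClass_self (G : SimpleGraph V) (u : V) : u ∈ eClass G u :=
  fun _ _ => Reachable.refl u

lemma quotProj_of_notMem (hx : x ∉ eClass G u) : quotProj G u x = some ⟨x, hx⟩ :=
  dif_neg hx

lemma quotProj_eq_some_iff {a : {w : V // w ∉ eClass G u}} : quotProj G u x = some a ↔ x = a.1 := by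
  unfold quotProj
  split_ifs with hx
  · exact ⟨nofun, fun h => absurd (h ▸ hx) a.2⟩
  · exact ⟨fun h => congrArg Subtype.val (Option.some_injective _ h), fun h => by subst h; rfl⟩

lemma quotProj_injOn : Set.InjOn (quotProj G u) (eClass G u)ᶜ := fun _ _ _ hy hxy =>
  quotProj_eq_some_iff.1 (hxy.trans (quotProj_of_notMem hy))

lemma quotGraph_adj_quotProj {y : V} (hx : x ∉ eClass G u) (hy : y ∉ eClass G u) :
    (quotGraph G u).Adj (quotProj G u x) (quotProj G u y) ↔ G.Adj x y := by
  rw [quotProj_of_notMem hx, quotProj_of_notMem hy]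
  rfl

def quotSection (G : SimpleGraph V) (u : V) : Option {w : V // w ∉ eClass G u} → V :=
  fun o => o.elim u Subtype.val

lemma quotProj_quotSection (o : Option {w : V // w ∉ eClass G u}) :
    quotProj G u (quotSection G u o) = o := by
  cases o with
  | none => exact dif_pos (mem_eClass_self G u)
  | some a => exact quotProj_of_notMem a.2

lemma quotSection_injective : Function.Injective (quotSection G u) :=
  Function.LeftInverse.injective quotProj_quotSection

lemma adj_quotSection {o o' : Option {w : V // w ∉ eClass G u}} (ho : o ≠ none) (ho' : o' ≠ none)
    (h : (quotGraph G u).Adj o o') : G.Adj (quotSection G u o) (quotSection G u o') := by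
  cases o with
  | none => exact absurd rfl ho
  | some a => cases o' with
    | none => exact absurd rfl ho'
    | some b => exact h

lemma exists_dominates_of_dominates_quotGraph {w : V} (hw : w ∉ eClass G u)
    (ρ : GraphRay (quotGraph G u)) (h : Dominates (quotGraph G u) (some ⟨w, hw⟩) ρ.toFun) :
    ∃ σ : GraphRay G, Dominates G w σ.toFun := by
  obtain ⟨M, hM, -⟩ := h.exists_of_finite (Set.finite_singleton none) (by simp)
  have hρ : ∀ n, (ρ.shift M).toFun n ≠ none := fun n => hM _ (Nat.le_add_left M n)
  refine ⟨(ρ.shift M).map (quotSection G u) quotSection_injective.injOn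
    fun n => adj_quotSection (hρ n) (hρ (n + 1)) ((ρ.shift M).adj n), fun F hwF => ?_⟩
  set F' := insert none (quotProj G u '' F)
  have hF' : ∀ o, o ∉ F' → quotSection G u o ∉ F := fun o ho hoF =>
    ho (Set.mem_insert_of_mem _ ⟨_, hoF, quotProj_quotSection o⟩)
  have hwF' : some ⟨w, hw⟩ ∉ F' := by
    rintro (h | ⟨x, hx, hxw⟩)
    · exact nomatch h
    · rw [quotProj_eq_some_iff.1 hxw] at hx
      exact hwF hx
  obtain ⟨k, htail, hreach⟩ := (h.shift M).exists_of_finite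
    ((F.finite_toSet.image _).insert none) hwF'
  refine ⟨k, fun n hn => hF' _ (htail n hn), ?_⟩
  refine hreach.map (quotSection G u) (fun x y hx hy => adj_quotSection ?_ ?_) hF'
  exacts [fun h => hx (h ▸ Set.mem_insert _ _), fun h => hy (h ▸ Set.mem_insert _ _)]

lemma exists_finite_separator_of_notMem_eClass {w : V} (hw : w ∉ eClass G u) :
    ∃ X : Set V, X.Finite ∧ w ∉ X ∧ ∀ x, ReachAvoiding G X w x → x ∉ eClass G u := by
  classical
  obtain ⟨D, hDE, hD⟩ : ∃ D : Finset (Sym2 V), (D : Set (Sym2 V)) ⊆ G.edgeSet ∧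
      ¬ (G.deleteEdges D).Reachable u w := by
    simpa [eClass, VertexEdgeEquiv, EdgeSetEquiv] using hw
  refine ⟨{x | ∃ e ∈ (D : Set (Sym2 V)), x ∈ e} \ {w}, ?_, fun h => h.2 rfl,
    fun x hx hxu => hD ((hxu D hDE).trans hx.reachable_deleteEdges.symm)⟩
  refine (D.biUnion Sym2.toFinset).finite_toSet.subset fun x hx => ?_
  obtain ⟨⟨e, he, hxe⟩, -⟩ := hx
  exact Finset.mem_biUnion.2 ⟨e, he, Sym2.mem_toFinset.2 hxe⟩

lemma exists_dominates_quotGraph_of_dominates {w : V} (hw : w ∉ eClass G u)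
    (r : GraphRay G) (h : Dominates G w r.toFun) :
    ∃ σ : GraphRay (quotGraph G u), Dominates (quotGraph G u) (some ⟨w, hw⟩) σ.toFun := by
  obtain ⟨X, hX, hwX, hXu⟩ := exists_finite_separator_of_notMem_eClass hw
  obtain ⟨N, hN⟩ := h.exists_forall_reachAvoiding hX hwX
  have hr : ∀ n, (r.shift N).toFun n ∉ eClass G u := fun n => hXu _ (hN _ (Nat.le_add_left N n))
  refine ⟨(r.shift N).map (quotProj G u) (quotProj_injOn.mono (Set.range_subset_iff.2 hr))
    fun n => (quotGraph_adj_quotProj (hr n) (hr (n + 1))).2 ((r.shift N).adj n), fun F' hwF' => ?_⟩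
  set F := X ∪ (quotProj G u ⁻¹' F' \ eClass G u)
  have hF : F.Finite := hX.union <| Set.Finite.of_finite_image
    (F'.finite_toSet.subset (Set.image_subset_iff.2 fun _ hx => hx.1))
    (quotProj_injOn.mono fun _ hx => hx.2)
  have hwF : w ∉ F := by
    rintro (hw' | ⟨hw', -⟩)
    · exact hwX hw'
    · exact hwF' (quotProj_of_notMem hw ▸ hw')
  have hF' : ∀ x, x ∉ F ∪ eClass G u → quotProj G u x ∉ F' := fun x hx hxF' =>
    hx <| (em (x ∈ eClass G u)).elim Or.inr fun hxu => Or.inl (Or.inr ⟨hxF', hxu⟩)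
  obtain ⟨k, htail, hreach⟩ := (h.shift N).exists_of_finite hF hwF
  refine ⟨k, fun n hn => hF' _ fun hn' => hn'.elim (htail n hn) (hr n), ?_⟩
  rw [← quotProj_of_notMem hw]
  refine (hreach.union fun x hx => hXu x (hx.mono Set.subset_union_left)).map (quotProj G u)
    (fun x y hx hy => ?_) hF'
  exact (quotGraph_adj_quotProj (fun h => hx (Or.inr h)) fun h => hy (Or.inr h)).2

end quotGraph

/-- For `w ∉ [u]_E`, the vertex `w` is timid in `G` if and only if it is
timid (as a vertex of the quotient) in `G/[u]_E`. -/
theorem timid_iff_timid_quotGraph {V : Type*} (G : SimpleGraph V) (u w : V)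
    (hw : w ∉ eClass G u) :
    Timid G w ↔ Timid (quotGraph G u) (some ⟨w, hw⟩) := by
  constructor
  · intro hT ρ hρ
    obtain ⟨σ, hσ⟩ := exists_dominates_of_dominates_quotGraph hw ρ hρ
    exact hT σ hσ
  · intro hT r hr
    obtain ⟨σ, hσ⟩ := exists_dominates_quotGraph_of_dominates hw r hr
    exact hT σ hσ
end

section
/- Let G be a simple graph and U ⊆ V(G) with ∂t_U ⊆ U. Then the map ρ_• : Ω_U(G) → D_U(G), sending the U-class of a ray r to the U-direction ρ_r, is a homeomorphism. -/
open SimpleGraph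

/-- Symmetry of `ReachAvoiding`. -/
theorem ReachAvoiding.symm {V : Type*} {G : SimpleGraph V} {F : Set V} {u v : V}
    (h : ReachAvoiding G F u v) : ReachAvoiding G F v u := by
  obtain ⟨w, hw⟩ := h
  exact ⟨w.reverse, fun x hx =>
    hw x (by simpa [SimpleGraph.Walk.support_reverse] using hx)⟩

/-- Transitivity of `ReachAvoiding`. -/
theorem ReachAvoiding.trans {V : Type*} {G : SimpleGraph V} {F : Set V} {u v x : V}
    (h1 : ReachAvoiding G F u v) (h2 : ReachAvoiding G F v x) : ReachAvoiding G F u x := by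
  obtain ⟨w1, hw1⟩ := h1
  obtain ⟨w2, hw2⟩ := h2
  refine ⟨w1.append w2, fun y hy => ?_⟩
  rcases (SimpleGraph.Walk.mem_support_append_iff w1 w2).mp hy with h | h
  · exact hw1 y h
  · exact hw2 y h

/-- Walking along a ray whose tail from `i` on avoids `F` yields reachability in `G − F`. -/
theorem GraphRay.reach_of_tail_avoid {V : Type*} {G : SimpleGraph V} (r : GraphRay G)
    (F : Set V) {i j : ℕ} (hij : i ≤ j) (h : ∀ n, i ≤ n → r.toFun n ∉ F) :
    ReachAvoiding G F (r.toFun i) (r.toFun j) := by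
  induction j, hij using Nat.le_induction with
  | base => exact ⟨SimpleGraph.Walk.nil, by
      intro x hx
      simp only [SimpleGraph.Walk.support_nil, List.mem_singleton] at hx
      subst hx; exact h i le_rfl⟩
  | succ j hij ih =>
    obtain ⟨w, hw⟩ := ih
    refine ⟨w.concat (r.adj j), fun x hx => ?_⟩
    rw [SimpleGraph.Walk.support_concat, List.mem_append] at hx
    rcases hx with hx | hx
    · exact hw x hx
    · simp only [List.mem_singleton] at hx
      subst hx; exact h (j + 1) (by omega)

/-- A ray eventually avoids every finite vertex set. -/
theorem GraphRay.exists_tail_avoid {V : Type*} {G : SimpleGraph V} (r : GraphRay G)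
    (F : Finset V) : ∃ k, ∀ n, k ≤ n → r.toFun n ∉ (F : Set V) := by
  have hfin : {n | r.toFun n ∈ (F : Set V)}.Finite :=
    Set.Finite.preimage r.injective.injOn F.finite_toSet
  obtain ⟨b, hb⟩ := hfin.bddAbove
  exact ⟨b + 1, fun n hn hmem => by have := hb hmem; omega⟩
/-- A `U`-direction of `G`: an assignment, to each finite `F ⊆ U`, of an infinite
connected component of `G − F` (recorded as its vertex set), compatible with inclusions. -/
structure UDirection {V : Type*} (G : SimpleGraph V) (U : Set V) where
  comp : (F : Finset V) → (F : Set V) ⊆ U → Set V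
  isComp : ∀ (F : Finset V) (hF : (F : Set V) ⊆ U),
    ∃ v, v ∉ (F : Set V) ∧ comp F hF = {w | ReachAvoiding G (F : Set V) v w}
  infinite : ∀ (F : Finset V) (hF : (F : Set V) ⊆ U), (comp F hF).Infinite
  mono : ∀ (F F' : Finset V) (hF : (F : Set V) ⊆ U) (hF' : (F' : Set V) ⊆ U),
    F ⊆ F' → comp F' hF' ⊆ comp F hF

theorem UDirection.ext' {V : Type*} {G : SimpleGraph V} {U : Set V}
    {ρ ρ' : UDirection G U} (h : ρ.comp = ρ'.comp) : ρ = ρ' := by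
  cases ρ; cases ρ'; cases h; rfl

/-- The direction space `D_U(G)`, topologized by the basic open sets
`D_U(F, ρ) = {ρ' : ρ'(F) = ρ(F)}` for finite `F ⊆ U`. -/
instance {V : Type*} (G : SimpleGraph V) (U : Set V) : TopologicalSpace (UDirection G U) :=
  TopologicalSpace.generateFrom
    {S | ∃ (F : Finset V) (hF : (F : Set V) ⊆ U) (ρ : UDirection G U),
      S = {ρ' : UDirection G U | ρ'.comp F hF = ρ.comp F hF}}

/-- The `U`-direction `ρ_r` of a ray `r`: it sends a finite `F ⊆ U` to the connected
component of `G − F` containing a tail of `r`. -/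
def rayDirection {V : Type*} (G : SimpleGraph V) (U : Set V) (r : GraphRay G) :
    UDirection G U where
  comp F _ := {w | ∃ k, (∀ n, k ≤ n → r.toFun n ∉ (F : Set V)) ∧
    ReachAvoiding G (F : Set V) (r.toFun k) w}
  isComp := by
    intro F _
    obtain ⟨k0, hk0⟩ := r.exists_tail_avoid F
    refine ⟨r.toFun k0, hk0 k0 le_rfl, ?_⟩
    ext w
    constructor
    · rintro ⟨k, hk, hre⟩
      rcases le_total k0 k with hh | hh
      · exact (r.reach_of_tail_avoid _ hh hk0).trans hre
      · exact (ReachAvoiding.symm (r.reach_of_tail_avoid _ hh hk)).trans hre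
    · intro hw
      exact ⟨k0, hk0, hw⟩
  infinite := by
    intro F _
    obtain ⟨k0, hk0⟩ := r.exists_tail_avoid F
    refine Set.Infinite.mono ?_ ((Set.Ici_infinite k0).image r.injective.injOn)
    rintro _ ⟨n, hn, rfl⟩
    exact ⟨k0, hk0, r.reach_of_tail_avoid _ hn hk0⟩
  mono := by
    rintro F F' hF hF' hss w ⟨k, ht, hw⟩
    exact ⟨k, fun n hn hmem => ht n hn (Finset.coe_subset.mpr hss hmem),
      hw.imp fun p hp => fun x hx hmem => hp x hx (Finset.coe_subset.mpr hss hmem)⟩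

/-- The map `ρ_• : Ω_U(G) → D_U(G)` sending the `U`-class `[r]_U` of a ray to `ρ_r`. -/
def rhoMap {V : Type*} (G : SimpleGraph V) (U : Set V) : OmegaU G U → UDirection G U :=
  Quot.lift (rayDirection G U) (by
    have key : ∀ a b : GraphRay G, UEquiv G U a b → ∀ (F : Finset V) (hF : (F : Set V) ⊆ U),
        (rayDirection G U a).comp F hF ⊆ (rayDirection G U b).comp F hF := by
      rintro a b hab F hF w ⟨k, hk, hre⟩
      obtain ⟨k1, k1', h1, h1', hco⟩ := hab F hF
      refine ⟨k1', h1', ReachAvoiding.trans (ReachAvoiding.symm hco)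
        (ReachAvoiding.trans ?_ hre)⟩
      rcases le_total k1 k with hh | hh
      · exact a.reach_of_tail_avoid _ hh h1
      · exact ReachAvoiding.symm (a.reach_of_tail_avoid _ hh hk)
    intro r r' h
    have hsymm : UEquiv G U r' r := by
      intro F hF
      obtain ⟨k, k', h1, h2, h3⟩ := h F hF
      exact ⟨k', k, h2, h1, ReachAvoiding.symm h3⟩
    refine UDirection.ext' ?_
    funext F hF
    exact subset_antisymm (key r r' h F hF) (key r' r hsymm F hF))
/-- `v` is `U`-timid: for every ray `r` there is a finite `F ⊆ U ∖ {v}` such that no tail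
of `r` lies in the connected component of `v` in `G − F`. -/
def UTimid {V : Type*} (G : SimpleGraph V) (U : Set V) (v : V) : Prop :=
  ∀ r : GraphRay G, ∃ F : Finset V, (F : Set V) ⊆ U \ {v} ∧
    ∀ k, (∀ n, k ≤ n → r.toFun n ∉ (F : Set V)) → ¬ ReachAvoiding G (F : Set V) v (r.toFun k)

/-- `v` is `U`-dense: for every finite `F ⊆ U ∖ {v}`, the connected component of `v` in
`G − F` is infinite. -/
def UDense {V : Type*} (G : SimpleGraph V) (U : Set V) (v : V) : Prop :=
  ∀ F : Finset V, (F : Set V) ⊆ U \ {v} → {w | ReachAvoiding G (F : Set V) v w}.Infinite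

/-- `∂t_U`: the set of vertices of `G` that are both `U`-timid and `U`-dense. -/
def timidBoundary {V : Type*} (G : SimpleGraph V) (U : Set V) : Set V :=
  {v | UTimid G U v ∧ UDense G U v}

/-!
Two rays have the same direction exactly when they are `U`-equivalent, and `ρ_•` pulls the basic
open sets of `D_U(G)` back to those of `Ω_U(G)`; so `ρ_•` is an embedding, and everything rests on
surjectivity. Say `x` dominates a direction `ρ` if `x ∈ ρ(F)` for every finite `F ⊆ U` missing `x`.

A dominating vertex outside `U` is `U`-dense, hence not `U`-timid because `∂t_U ⊆ U`, and a ray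
it dominates has direction `ρ`. Otherwise every dominating vertex lies in `U`, and a ray is
extracted from walks `x₀ → x₁ → ⋯`, the walk `xₘ → xₘ₊₁` running inside `ρ(Aₘ)`, where `Aₘ₊₂`
contains finite sets cutting the vertices of that walk off from `ρ`. Each vertex then lies on
finitely many of the walks, so their concatenation contains a ray through their late parts.
If infinitely many vertices dominate `ρ`, the `xₘ` are taken dominating, and the walks end up
in every `ρ(F)`. If only finitely many do, they are deleted at every stage, and `Aₘ₊₁` keeps only
the parts of the cut sets outside the vertices met so far; these vertices stay cut off, since on a
walk inside `ρ(Aₘ₊₁)` to one of them from a vertex in all the cut components, the first such vertex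
would have avoided its own cut set. So consecutive `Aₘ` meet only in the deleted dominating
vertices, and no vertex lies in every `ρ(Aₘ)`: along a walk from it to a vertex that is eventually
cut off, the first vertex to leave `ρ(Aₘ)` would lie in all late `Aₘ`. Hence `ρ(Aₘ)` eventually
misses each finite `F ⊆ U`, and then lies inside `ρ(F)`.
-/

open Filter
open scoped Classical

theorem exists_last_eq {α : Type*} {w : ℕ → α} (hw : ∀ a, {t | w t = a}.Finite) (t : ℕ) :
    ∃ s, t ≤ s ∧ w s = w t ∧ ∀ u, s < u → w u ≠ w t := by
  have hbdd := (hw (w t)).bddAbove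
  exact ⟨sSup {u | w u = w t}, le_csSup hbdd rfl,
    Nat.sSup_mem (s := {u | w u = w t}) ⟨t, rfl⟩ hbdd,
    fun u hu hwu => (le_csSup hbdd hwu).not_gt hu⟩

theorem exists_ge_mem_Ico_of_strictMono {f : ℕ → ℕ} (hf : StrictMono f) {M t : ℕ}
    (ht : f M ≤ t) : ∃ m, M ≤ m ∧ t ∈ Set.Ico (f m) (f (m + 1)) := by
  induction t, ht using Nat.le_induction with
  | base => exact ⟨M, le_rfl, le_rfl, hf (Nat.lt_succ_self M)⟩
  | succ t _ ih =>
    obtain ⟨m, hMm, hmt, htm⟩ := ih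
    rcases (Nat.succ_le_of_lt htm).lt_or_eq with h | h
    · exact ⟨m, hMm, by omega, h⟩
    · exact ⟨m + 1, by omega, h.ge, h.trans_lt (hf (Nat.lt_succ_self _))⟩

theorem exists_seq_of_forall_exists {α : Type*} {P : α → Prop} {R : α → α → Prop} {a : α}
    (ha : P a) (h : ∀ a, P a → ∃ b, P b ∧ R a b) :
    ∃ f : ℕ → α, ∀ n, P (f n) ∧ R (f n) (f (n + 1)) := by
  choose! g hgP hgR using h
  have hP : ∀ n, P (g^[n] a) := fun n => by
    induction n with
    | zero => exact ha
    | succ n ih => rw [Function.iterate_succ_apply']; exact hgP _ ih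
  refine ⟨fun n => g^[n] a, fun n => ⟨hP n, ?_⟩⟩
  simp only [Function.iterate_succ_apply']
  exact hgR _ (hP n)

theorem exists_mem_forall_mem_of_antitone {α : Type*} {C : ℕ → Set α} (hC : Antitone C)
    (F : Finset α) (h : ∀ m, ¬ Disjoint (C m) F) : ∃ f ∈ F, ∀ m, f ∈ C m := by
  by_contra! hF
  choose! g hg using hF
  obtain ⟨f, hfC, hfF⟩ := Set.not_disjoint_iff.1 (h (F.sup g))
  exact hg f hfF (hC (Finset.le_sup hfF) hfC)

section ReachAvoiding

variable {V : Type*} {G : SimpleGraph V} {F : Set V} {u v : V}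

theorem ReachAvoiding.refl (hu : u ∉ F) : ReachAvoiding G F u u :=
  ⟨.nil, by simpa using hu⟩

theorem ReachAvoiding.notMem_right (h : ReachAvoiding G F u v) : v ∉ F :=
  let ⟨p, hp⟩ := h
  hp v p.end_mem_support

theorem ReachAvoiding.of_adj (hu : u ∉ F) (hv : v ∉ F) (h : G.Adj u v) :
    ReachAvoiding G F u v :=
  ⟨.cons h .nil, by simp [hu, hv]⟩

theorem ReachAvoiding.of_mem_support (p : G.Walk u v) (hp : ∀ z ∈ p.support, z ∉ F) {z : V}
    (hz : z ∈ p.support) : ReachAvoiding G F z v :=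
  ⟨p.dropUntil z hz, fun y hy => hp y (p.support_dropUntil_subset_support hz hy)⟩

end ReachAvoiding

theorem Finset.coe_union_subset {V : Type*} {U : Set V} {A B : Finset V}
    (hA : (A : Set V) ⊆ U) (hB : (B : Set V) ⊆ U) : ((A ∪ B : Finset V) : Set V) ⊆ U := by
  rw [Finset.coe_union]
  exact Set.union_subset hA hB

namespace UDirection

variable {V : Type*} {G : SimpleGraph V} {U : Set V} (ρ : UDirection G U)
  {F : Finset V} {hF : (F : Set V) ⊆ U} {u v : V}

theorem comp_eq_of_mem (hu : u ∈ ρ.comp F hF) :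
    ρ.comp F hF = {w | ReachAvoiding G (F : Set V) u w} := by
  obtain ⟨c, -, hc⟩ := ρ.isComp F hF
  rw [hc] at hu ⊢
  ext w
  exact ⟨fun hw => hu.symm.trans hw, hu.trans⟩

theorem mem_comp_of_reachAvoiding (hu : u ∈ ρ.comp F hF) (h : ReachAvoiding G F u v) :
    v ∈ ρ.comp F hF := by
  rw [ρ.comp_eq_of_mem hu]
  exact h

theorem reachAvoiding_of_mem_comp (hu : u ∈ ρ.comp F hF) (hv : v ∈ ρ.comp F hF) :
    ReachAvoiding G F u v := by
  rw [ρ.comp_eq_of_mem hu] at hv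
  exact hv

theorem notMem_of_mem_comp (hu : u ∈ ρ.comp F hF) : u ∉ (F : Set V) :=
  (ρ.reachAvoiding_of_mem_comp hu hu).notMem_right

theorem mem_comp_of_adj (hu : u ∈ ρ.comp F hF) (h : G.Adj u v) (hv : v ∉ (F : Set V)) :
    v ∈ ρ.comp F hF :=
  ρ.mem_comp_of_reachAvoiding hu (.of_adj (ρ.notMem_of_mem_comp hu) hv h)

theorem comp_eq_comp_of_mem {ρ' : UDirection G U} (hu : u ∈ ρ.comp F hF)
    (hu' : u ∈ ρ'.comp F hF) : ρ.comp F hF = ρ'.comp F hF := by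
  rw [ρ.comp_eq_of_mem hu, ρ'.comp_eq_of_mem hu']

theorem mem_comp_of_mem_support (p : G.Walk u v) (hp : ∀ z ∈ p.support, z ∉ (F : Set V))
    (hv : v ∈ ρ.comp F hF) {z : V} (hz : z ∈ p.support) : z ∈ ρ.comp F hF :=
  ρ.mem_comp_of_reachAvoiding hv (ReachAvoiding.of_mem_support p hp hz).symm

theorem exists_walk_of_mem_comp (hu : u ∈ ρ.comp F hF) (hv : v ∈ ρ.comp F hF) :
    ∃ p : G.Walk u v, ∀ z ∈ p.support, z ∈ ρ.comp F hF := by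
  obtain ⟨p, hp⟩ := ρ.reachAvoiding_of_mem_comp hu hv
  exact ⟨p, fun z hz => ρ.mem_comp_of_mem_support p hp hv hz⟩

theorem comp_subset_of_adj_closed {P : Set V} {c : V} (hc : c ∈ ρ.comp F hF) (hcP : c ∈ P)
    (hP : ∀ y y', y ∈ ρ.comp F hF → y ∈ P → G.Adj y y' → y' ∉ (F : Set V) → y' ∈ P) :
    ρ.comp F hF ⊆ P := by
  intro y hy
  obtain ⟨p, hp⟩ := ρ.reachAvoiding_of_mem_comp hc hy
  clear hy
  induction p with
  | nil => exact hcP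
  | cons h p ih =>
    have hnext := hp _ (List.mem_cons_of_mem _ p.start_mem_support)
    exact ih (ρ.mem_comp_of_adj hc h hnext) (hP _ _ hc hcP h hnext)
      fun z hz => hp z (by simp [hz])

theorem comp_subset_of_disjoint {S : Finset V} {hS : (S : Set V) ⊆ U}
    (hdisj : Disjoint (ρ.comp F hF) S) : ρ.comp F hF ⊆ ρ.comp S hS := by
  obtain ⟨c, hc⟩ := (ρ.infinite _ (Finset.coe_union_subset hF hS)).nonempty
  refine ρ.comp_subset_of_adj_closed (ρ.mono _ _ _ _ Finset.subset_union_left hc)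
    (ρ.mono _ _ _ _ Finset.subset_union_right hc) fun y y' hy hyS hyy' hy' => ?_
  exact ρ.mem_comp_of_adj hyS hyy' (hdisj.notMem_of_mem_left (ρ.mem_comp_of_adj hy hyy' hy'))

theorem notMem_comp_of_forall_notMem_comp_union {O S : Finset V} {hS : (S : Set V) ⊆ U}
    (K : V → Finset V) (hKU : ∀ v, (K v : Set V) ⊆ U) (hKv : ∀ v ∈ O, v ∉ K v)
    (hKO : ∀ v ∈ O, K v ⊆ O ∪ S)
    (hK : ∀ v ∈ O, v ∉ ρ.comp (K v ∪ S) (Finset.coe_union_subset (hKU v) hS)) :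
    ∀ v ∈ O, v ∉ ρ.comp S hS := by
  set T := {y | ∀ v ∈ O, y ∈ ρ.comp (K v ∪ S) (Finset.coe_union_subset (hKU v) hS)}
  have hbig : ((O.biUnion K ∪ S : Finset V) : Set V) ⊆ U := by
    refine Finset.coe_union_subset ?_ hS
    simpa using fun v _ => hKU v
  obtain ⟨c, hc⟩ := (ρ.infinite _ hbig).nonempty
  have hcT : c ∈ T := fun v hv =>
    ρ.mono _ _ _ _ (Finset.union_subset_union (Finset.subset_biUnion_of_mem K hv) le_rfl) hc
  have hsub : ρ.comp S hS ⊆ T := by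
    refine ρ.comp_subset_of_adj_closed (ρ.mono _ _ _ _ Finset.subset_union_right hc) hcT
      fun y y' _ hyT hyy' hy' v hv => ρ.mem_comp_of_adj (hyT v hv) hyy' ?_
    simp only [Finset.coe_union, Set.mem_union, Finset.mem_coe, not_or]
    refine ⟨fun hy'K => ?_, hy'⟩
    have hy'O : y' ∈ O := (Finset.mem_union.1 (hKO v hv hy'K)).resolve_right hy'
    exact hK y' hy'O (ρ.mem_comp_of_adj (hyT y' hy'O) hyy' (by simp [hKv y' hy'O, hy']))
  exact fun v hv hvS => hK v hv (hsub hvS v hv)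

theorem exists_mem_support_eventually_mem (A : ℕ → Finset V) (hA : ∀ m, (A m : Set V) ⊆ U)
    (hanti : Antitone fun m => ρ.comp (A m) (hA m)) (p : G.Walk u v)
    (hu : ∀ m, u ∈ ρ.comp (A m) (hA m)) (hv : ∃ m, v ∉ ρ.comp (A m) (hA m)) :
    ∃ z ∈ p.support, ∀ᶠ m in atTop, z ∈ A m := by
  induction p with
  | nil =>
    obtain ⟨m, hm⟩ := hv
    exact absurd (hu m) hm
  | @cons _ w _ h p ih =>
    by_cases hw : ∀ m, w ∈ ρ.comp (A m) (hA m)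
    · obtain ⟨z, hz, hzA⟩ := ih hw hv
      exact ⟨z, List.mem_cons_of_mem _ hz, hzA⟩
    · obtain ⟨m₀, hm₀⟩ := not_forall.1 hw
      refine ⟨_, List.mem_cons_of_mem _ p.start_mem_support, eventually_atTop.2 ⟨m₀, ?_⟩⟩
      intro m hm
      by_contra hwA
      exact hm₀ (hanti hm (ρ.mem_comp_of_adj (hu m) h hwA))

end UDirection

/-- The ray jumps from each vertex to just after the walk's last visit to it. -/
theorem exists_graphRay_of_adj {V : Type*} {G : SimpleGraph V} {w : ℕ → V}
    (hadj : ∀ t, G.Adj (w t) (w (t + 1))) (hw : ∀ v, {t | w t = v}.Finite) :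
    ∃ r : GraphRay G, ∀ n, ∃ t, n ≤ t ∧ r.toFun n = w t := by
  choose last hle heq hlast using exists_last_eq hw
  let φ : ℕ → ℕ := fun n => Nat.rec 0 (fun _ t => last t + 1) n
  have hφ : ∀ n, φ (n + 1) = last (φ n) + 1 := fun _ => rfl
  have hmono : StrictMono φ := strictMono_nat_of_lt_succ fun n => by
    rw [hφ]; exact Nat.lt_succ_of_le (hle _)
  refine ⟨⟨w ∘ φ, Function.Injective.of_lt_imp_ne fun m n hmn => ?_, fun n => ?_⟩,
    fun n => ⟨φ n, hmono.le_apply, rfl⟩⟩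
  · refine (hlast (φ m) (φ n) ?_).symm
    have : φ (m + 1) ≤ φ n := hmono.monotone hmn
    rw [hφ] at this
    omega
  · show G.Adj (w (φ n)) (w (last (φ n) + 1))
    rw [← heq (φ n)]
    exact hadj _

section ConcatWalks

variable {V : Type*} {G : SimpleGraph V} {x : ℕ → V} (W : ∀ m, G.Walk (x m) (x (m + 1)))

def concatWalks : ∀ m, G.Walk (x 0) (x m)
  | 0 => .nil
  | m + 1 => (concatWalks m).append (W m)

theorem length_concatWalks_mono : Monotone fun m => (concatWalks W m).length :=
  monotone_nat_of_le_succ fun m => by simp [concatWalks]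

theorem length_concatWalks_strictMono (hx : ∀ m, x m ≠ x (m + 1)) :
    StrictMono fun m => (concatWalks W m).length :=
  strictMono_nat_of_lt_succ fun m => by
    have : (W m).length ≠ 0 := fun h => hx m ((W m).eq_of_length_eq_zero h)
    simp only [concatWalks, SimpleGraph.Walk.length_append]
    omega

theorem getVert_concatWalks_of_le {m m' t : ℕ} (hm : m ≤ m')
    (ht : t ≤ (concatWalks W m).length) :
    (concatWalks W m').getVert t = (concatWalks W m).getVert t := by
  induction m', hm using Nat.le_induction with
  | base => rfl
  | succ m' hm ih =>
    rw [concatWalks, SimpleGraph.Walk.getVert_append',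
      if_pos (ht.trans (length_concatWalks_mono W hm)), ih]

theorem exists_adj_seq_of_walks (hx : ∀ m, x m ≠ x (m + 1)) :
    ∃ w : ℕ → V, (∀ t, G.Adj (w t) (w (t + 1))) ∧
      ∀ M, ∀ᶠ t in atTop, ∃ m, M ≤ m ∧ w t ∈ (W m).support := by
  set P := concatWalks W
  have hP := length_concatWalks_strictMono W hx
  have hw : ∀ m t, t ≤ (P m).length → (P (t + 1)).getVert t = (P m).getVert t := by
    intro m t ht
    rcases le_total (t + 1) m with h | h
    · exact (getVert_concatWalks_of_le W h (hP.le_apply.trans' (Nat.le_succ t))).symm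
    · exact getVert_concatWalks_of_le W h ht
  -- `P (t + 1)` is long enough to reach time `t`, and all longer prefixes agree with it there.
  refine ⟨fun t => (P (t + 1)).getVert t, fun t => ?_, fun M => ?_⟩
  · show G.Adj ((P (t + 1)).getVert t) ((P (t + 1 + 1)).getVert (t + 1))
    rw [hw (t + 1) (t + 1) hP.le_apply]
    exact (P (t + 1)).adj_getVert_succ (Nat.lt_of_succ_le hP.le_apply)
  · refine eventually_atTop.2 ⟨(P M).length, fun t ht => ?_⟩
    obtain ⟨m, hMm, hmt, htm⟩ := exists_ge_mem_Ico_of_strictMono hP ht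
    refine ⟨m, hMm, ?_⟩
    show (P (t + 1)).getVert t ∈ _
    rw [hw (m + 1) t htm.le]
    show ((P m).append (W m)).getVert t ∈ _
    rw [SimpleGraph.Walk.getVert_append, if_neg (not_lt.2 hmt)]
    exact (W m).getVert_mem_support _

end ConcatWalks

theorem exists_graphRay_of_walks {V : Type*} {G : SimpleGraph V} {x : ℕ → V}
    (W : ∀ m, G.Walk (x m) (x (m + 1))) (hx : ∀ m, x m ≠ x (m + 1))
    (hfin : ∀ v, ∀ᶠ m in atTop, v ∉ (W m).support) :
    ∃ r : GraphRay G, ∀ M, ∀ᶠ n in atTop, ∃ m, M ≤ m ∧ r.toFun n ∈ (W m).support := by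
  obtain ⟨w, hadj, htail⟩ := exists_adj_seq_of_walks W hx
  have hw : ∀ v, {t | w t = v}.Finite := by
    intro v
    obtain ⟨M, hM⟩ := eventually_atTop.1 (hfin v)
    obtain ⟨T, hT⟩ := eventually_atTop.1 (htail M)
    refine (Set.finite_lt_nat T).subset fun t (ht : w t = v) =>
      show t < T from not_le.1 fun hTt => ?_
    obtain ⟨m, hMm, hm⟩ := hT t hTt
    exact hM m hMm (ht ▸ hm)
  obtain ⟨r, hr⟩ := exists_graphRay_of_adj hadj hw
  refine ⟨r, fun M => ?_⟩
  obtain ⟨T, hT⟩ := eventually_atTop.1 (htail M)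
  refine eventually_atTop.2 ⟨T, fun n hn => ?_⟩
  obtain ⟨t, hnt, hrt⟩ := hr n
  exact hrt ▸ hT t (hn.trans hnt)

section RayDirection

variable {V : Type*} {G : SimpleGraph V} {U : Set V} {F : Finset V} {hF : (F : Set V) ⊆ U}

theorem mem_rayDirection_comp {r : GraphRay G} {k : ℕ}
    (hk : ∀ n, k ≤ n → r.toFun n ∉ (F : Set V)) : r.toFun k ∈ (rayDirection G U r).comp F hF :=
  ⟨k, hk, .refl (hk k le_rfl)⟩

theorem rayDirection_comp_eq_iff {r r' : GraphRay G} :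
    (rayDirection G U r).comp F hF = (rayDirection G U r').comp F hF ↔
      TailsConnected G F r.toFun r'.toFun := by
  constructor
  · intro h
    obtain ⟨k', hk'⟩ := r'.exists_tail_avoid F
    obtain ⟨k, hk, hreach⟩ : r'.toFun k' ∈ (rayDirection G U r).comp F hF :=
      h ▸ mem_rayDirection_comp hk'
    exact ⟨k, k', hk, hk', hreach⟩
  · rintro ⟨k, k', hk, hk', hreach⟩
    exact UDirection.comp_eq_comp_of_mem _ ⟨k, hk, hreach⟩ (mem_rayDirection_comp hk')

theorem rayDirection_eq_of_eventually_mem {ρ : UDirection G U} {r : GraphRay G}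
    (h : ∀ (F : Finset V) (hF : (F : Set V) ⊆ U), ∀ᶠ n in atTop, r.toFun n ∈ ρ.comp F hF) :
    rayDirection G U r = ρ := by
  refine UDirection.ext' (funext fun F => funext fun hF => ?_)
  obtain ⟨k, hk⟩ := eventually_atTop.1 (h F hF)
  exact UDirection.comp_eq_comp_of_mem _
    (mem_rayDirection_comp fun n hn => ρ.notMem_of_mem_comp (hk n hn)) (hk k le_rfl)

theorem UDirection.exists_rayDirection_eq_of_walks (ρ : UDirection G U) {x : ℕ → V}
    (W : ∀ m, G.Walk (x m) (x (m + 1))) (hx : ∀ m, x m ≠ x (m + 1))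
    (hfin : ∀ v, ∀ᶠ m in atTop, v ∉ (W m).support)
    (hconv : ∀ (F : Finset V) (hF : (F : Set V) ⊆ U),
      ∀ᶠ m in atTop, ∀ z ∈ (W m).support, z ∈ ρ.comp F hF) :
    ∃ r : GraphRay G, rayDirection G U r = ρ := by
  obtain ⟨r, hr⟩ := exists_graphRay_of_walks W hx hfin
  refine ⟨r, rayDirection_eq_of_eventually_mem fun F hF => ?_⟩
  obtain ⟨M, hM⟩ := eventually_atTop.1 (hconv F hF)
  exact (hr M).mono fun n ⟨m, hMm, hm⟩ => hM m hMm _ hm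

end RayDirection

theorem UDirection.eventually_notMem_support {V : Type*} {G : SimpleGraph V} {U : Set V}
    (ρ : UDirection G U) (A : ℕ → Finset V) (hA : ∀ m, (A m : Set V) ⊆ U)
    (hanti : Antitone fun m => ρ.comp (A m) (hA m)) {x : ℕ → V}
    (W : ∀ m, G.Walk (x m) (x (m + 1)))
    (hW : ∀ m, ∀ z ∈ (W m).support, z ∈ ρ.comp (A m) (hA m))
    (hdead : ∀ m, ∀ z ∈ (W m).support, z ∉ ρ.comp (A (m + 2)) (hA (m + 2))) (v : V) :
    ∀ᶠ m in atTop, v ∉ (W m).support := by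
  by_cases h : ∃ m₀, v ∈ (W m₀).support
  · obtain ⟨m₀, hm₀⟩ := h
    exact eventually_atTop.2 ⟨m₀ + 2, fun m hm hv => hdead m₀ v hm₀ (hanti hm (hW m v hv))⟩
  · exact Eventually.of_forall fun m hm => h ⟨m, hm⟩

section Stages

variable {V : Type*} {G : SimpleGraph V} {U : Set V}

/-- A stage of the ray constructions: the deleted set `A`, the current end `x` of the walk built
so far, and the vertices `O` that later stages must cut off from the direction. -/
structure Stage (U : Set V) where
  A : Finset V
  subset : (A : Set V) ⊆ U
  x : V
  O : Finset V

namespace UDirection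

variable (ρ : UDirection G U)

def DominatedBy (x : V) : Prop :=
  ∀ (F : Finset V) (hF : (F : Set V) ⊆ U), x ∉ (F : Set V) → x ∈ ρ.comp F hF

theorem exists_notMem_comp (hD : ∀ x, ρ.DominatedBy x → x ∈ U) (v : V) :
    ∃ (F : Finset V) (hF : (F : Set V) ⊆ U), v ∉ ρ.comp F hF := by
  by_cases hv : v ∈ U
  · exact ⟨{v}, by simpa using hv, fun h => ρ.notMem_of_mem_comp h (by simp)⟩
  · have : ¬ ρ.DominatedBy v := fun h => hv (hD v h)
    simp only [DominatedBy, not_forall] at this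
    obtain ⟨F, hF, -, hvF⟩ := this
    exact ⟨F, hF, hvF⟩

theorem exists_rayDirection_eq_of_dominatedBy_notMem (hbd : timidBoundary G U ⊆ U) {x : V}
    (hxU : x ∉ U) (hx : ρ.DominatedBy x) : ∃ r : GraphRay G, rayDirection G U r = ρ := by
  have hxF : ∀ F hF, x ∈ ρ.comp F hF := fun F hF => hx F hF fun h => hxU (hF h)
  have hdense : UDense G U x := fun F hF => by
    have hFU : (F : Set V) ⊆ U := fun a ha => (hF ha).1
    rw [← ρ.comp_eq_of_mem (hxF F hFU)]
    exact ρ.infinite F hFU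
  have hnt : ¬ UTimid G U x := fun ht => hxU (hbd ⟨ht, hdense⟩)
  simp only [UTimid, not_forall, not_exists, not_and, not_not] at hnt
  obtain ⟨r, hr⟩ := hnt
  refine ⟨r, rayDirection_eq_of_eventually_mem fun F hF => ?_⟩
  obtain ⟨k, hk, hreach⟩ := hr F fun a ha => ⟨hF ha, fun h => hxU (h ▸ hF ha)⟩
  have hrk := ρ.mem_comp_of_reachAvoiding (hxF F hF) hreach
  exact eventually_atTop.2 ⟨k, fun n hn =>
    ρ.mem_comp_of_reachAvoiding hrk (r.reach_of_tail_avoid _ hn hk)⟩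

def IsDominatedStep (K : V → Finset V) (a b : Stage U) : Prop :=
  a.A ⊆ b.A ∧ a.O.biUnion K ⊆ b.A ∧ a.x ≠ b.x ∧
    ∃ W : G.Walk a.x b.x, ∀ z ∈ W.support, z ∈ ρ.comp a.A a.subset ∧ z ∈ b.O

theorem exists_stages_of_infinite_dominatedBy (hinf : {x | ρ.DominatedBy x}.Infinite)
    (K : V → Finset V) (hKU : ∀ v, (K v : Set V) ⊆ U) :
    ∃ s : ℕ → Stage U, ∀ m, (ρ.DominatedBy (s m).x ∧ (s m).x ∉ (s m).A) ∧
      ρ.IsDominatedStep K (s m) (s (m + 1)) := by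
  obtain ⟨x₀, hx₀⟩ := hinf.nonempty
  apply exists_seq_of_forall_exists (P := fun a : Stage U => ρ.DominatedBy a.x ∧ a.x ∉ a.A)
    (R := ρ.IsDominatedStep K) (a := ⟨∅, by simp, x₀, ∅⟩) ⟨hx₀, Finset.notMem_empty _⟩
  rintro a ⟨hax, haA⟩
  have hA' : ((a.A ∪ a.O.biUnion K : Finset V) : Set V) ⊆ U :=
    Finset.coe_union_subset a.subset (by simpa using fun v _ => hKU v)
  obtain ⟨x', hx', hx'A⟩ := hinf.exists_notMem_finset (insert a.x (a.A ∪ a.O.biUnion K))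
  rw [Finset.mem_insert, not_or] at hx'A
  obtain ⟨W, hW⟩ := ρ.exists_walk_of_mem_comp (hax _ a.subset haA)
    (hx' _ a.subset fun h => hx'A.2 (Finset.mem_union_left _ h))
  exact ⟨⟨_, hA', x', W.support.toFinset⟩, ⟨hx', hx'A.2⟩, Finset.subset_union_left,
    Finset.subset_union_right, Ne.symm hx'A.1, W, fun z hz => ⟨hW z hz, List.mem_toFinset.2 hz⟩⟩

theorem exists_rayDirection_eq_of_infinite_dominatedBy (hD : ∀ x, ρ.DominatedBy x → x ∈ U)
    (hinf : {x | ρ.DominatedBy x}.Infinite) : ∃ r : GraphRay G, rayDirection G U r = ρ := by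
  choose K hKU hK using ρ.exists_notMem_comp hD
  obtain ⟨s, hs⟩ := ρ.exists_stages_of_infinite_dominatedBy hinf K hKU
  choose hdom hs using hs
  choose hA hKA hx W hW using hs
  have hanti : Antitone fun m => ρ.comp (s m).A (s m).subset :=
    antitone_nat_of_succ_le fun m => ρ.mono _ _ _ _ (hA m)
  have hfin := ρ.eventually_notMem_support (fun m => (s m).A) (fun m => (s m).subset) hanti W
    (fun m z hz => (hW m z hz).1) fun m z hz hzc =>
      hK z (ρ.mono _ _ _ _ ((Finset.subset_biUnion_of_mem K (hW m z hz).2).trans (hKA (m + 1))) hzc)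
  refine ρ.exists_rayDirection_eq_of_walks W hx hfin fun F hF => ?_
  filter_upwards [(eventually_all_finset F).2 fun f _ => hfin f] with m hm
  have havoid : ∀ z ∈ (W m).support, z ∉ (F : Set V) := fun z hz hzF => hm z hzF hz
  exact fun z hz => ρ.mem_comp_of_mem_support (W m) havoid
    ((hdom (m + 1)).1 F hF (havoid _ (W m).end_mem_support)) hz

theorem exists_comp_disjoint_of_inter_subset (A : ℕ → Finset V) (hA : ∀ m, (A m : Set V) ⊆ U)
    (hanti : Antitone fun m => ρ.comp (A m) (hA m)) (hA0 : ∀ m, A m ∩ A (m + 1) ⊆ A 0) {d : V}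
    (hd₀ : d ∈ ρ.comp (A 0) (hA 0)) (hd : ∃ m, d ∉ ρ.comp (A m) (hA m)) (F : Finset V) :
    ∃ m, Disjoint (ρ.comp (A m) (hA m)) (F : Set V) := by
  by_contra! h
  obtain ⟨f, -, hf⟩ := exists_mem_forall_mem_of_antitone hanti F h
  obtain ⟨p, hp⟩ := ρ.exists_walk_of_mem_comp (hf 0) hd₀
  obtain ⟨z, hz, hzA⟩ := ρ.exists_mem_support_eventually_mem A hA hanti p hf hd
  obtain ⟨m, hm⟩ := eventually_atTop.1 hzA
  exact ρ.notMem_of_mem_comp (hp z hz)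
    (hA0 m (Finset.mem_inter.2 ⟨hm m le_rfl, hm (m + 1) (Nat.le_succ m)⟩))

def IsCutOffStep (L : Finset V) (a b : Stage U) : Prop :=
  ρ.comp b.A b.subset ⊆ ρ.comp a.A a.subset ∧ (∀ v ∈ a.O, v ∉ ρ.comp b.A b.subset) ∧
    a.A ∩ b.A ⊆ L ∧ ∃ W : G.Walk a.x b.x, ∀ z ∈ W.support, z ∈ ρ.comp a.A a.subset ∧ z ∈ b.O

theorem exists_stages_of_cutOff (L : Finset V) (hL : (L : Set V) ⊆ U) (K : V → Finset V)
    (hKU : ∀ v, (K v : Set V) ⊆ U) (hKv : ∀ v, v ∉ K v)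
    (hK : ∀ v, v ∉ ρ.comp (K v ∪ L) (Finset.coe_union_subset (hKU v) hL)) :
    ∃ s : ℕ → Stage U, ∀ m, (L ⊆ (s m).A ∧ (s m).A ⊆ (s m).O ∧
      (s m).x ∈ ρ.comp (s m).A (s m).subset ∧ (s m).x ∈ (s m).O) ∧
      ρ.IsCutOffStep L (s m) (s (m + 1)) := by
  obtain ⟨x₀, hx₀⟩ := (ρ.infinite L hL).nonempty
  apply exists_seq_of_forall_exists (P := fun a : Stage U => L ⊆ a.A ∧ a.A ⊆ a.O ∧
      a.x ∈ ρ.comp a.A a.subset ∧ a.x ∈ a.O) (R := ρ.IsCutOffStep L)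
    (a := ⟨L, hL, x₀, insert x₀ L⟩)
    ⟨le_rfl, Finset.subset_insert _ _, hx₀, Finset.mem_insert_self _ _⟩
  rintro a ⟨-, hAO, hxA, hxO⟩
  set A' := a.O.biUnion K \ a.O ∪ L
  have hA' : (A' : Set V) ⊆ U := Finset.coe_union_subset
    ((Finset.coe_subset.2 Finset.sdiff_subset).trans (by simpa using fun v _ => hKU v)) hL
  have hdead : ∀ v ∈ a.O, v ∉ ρ.comp A' hA' := by
    refine ρ.notMem_comp_of_forall_notMem_comp_union K hKU (fun v _ => hKv v)
      (fun v hv u hu => ?_) fun v _ h => hK v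
        (ρ.mono _ _ _ _ (Finset.union_subset_union le_rfl Finset.subset_union_right) h)
    by_cases huO : u ∈ a.O
    · exact Finset.mem_union_left _ huO
    · exact Finset.mem_union_right _ (Finset.mem_union_left _
        (Finset.mem_sdiff.2 ⟨Finset.mem_biUnion.2 ⟨v, hv, hu⟩, huO⟩))
  have hsub : ρ.comp A' hA' ⊆ ρ.comp a.A a.subset :=
    ρ.comp_subset_of_disjoint (Set.disjoint_left.2 fun v hv hvA => hdead v (hAO hvA) hv)
  obtain ⟨x', hx'⟩ := (ρ.infinite A' hA').nonempty
  obtain ⟨W, hW⟩ := ρ.exists_walk_of_mem_comp hxA (hsub hx')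
  have hWO : ∀ z ∈ W.support, z ∈ A' ∪ W.support.toFinset := fun z hz =>
    Finset.mem_union_right _ (List.mem_toFinset.2 hz)
  refine ⟨⟨A', hA', x', A' ∪ W.support.toFinset⟩, ⟨Finset.subset_union_right,
    Finset.subset_union_left, hx', hWO _ W.end_mem_support⟩,
    hsub, hdead, fun u hu => ?_, W, fun z hz => ⟨hW z hz, hWO z hz⟩⟩
  obtain ⟨huA, huA'⟩ := Finset.mem_inter.1 hu
  exact (Finset.mem_union.1 huA').resolve_left fun h => (Finset.mem_sdiff.1 h).2 (hAO huA)

theorem exists_rayDirection_eq_of_finite_dominatedBy (hD : ∀ x, ρ.DominatedBy x → x ∈ U)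
    (hfin : {x | ρ.DominatedBy x}.Finite) : ∃ r : GraphRay G, rayDirection G U r = ρ := by
  set L := hfin.toFinset
  have hL : (L : Set V) ⊆ U := by rw [Set.Finite.coe_toFinset]; exact hD
  have hkill : ∀ v, ∃ (K : Finset V) (hK : (K : Set V) ⊆ U),
      v ∉ K ∧ v ∉ ρ.comp (K ∪ L) (Finset.coe_union_subset hK hL) := by
    intro v
    by_cases hv : ρ.DominatedBy v
    · exact ⟨∅, by simp, Finset.notMem_empty _,
        fun h => ρ.notMem_of_mem_comp h (by simpa [L] using hv)⟩
    · simp only [DominatedBy, not_forall] at hv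
      obtain ⟨F, hF, hvF, hvc⟩ := hv
      exact ⟨F, hF, hvF, fun h => hvc (ρ.mono _ _ _ _ Finset.subset_union_left h)⟩
  choose K hKU hKv hK using hkill
  obtain ⟨s, hs⟩ := ρ.exists_stages_of_cutOff L hL K hKU hKv hK
  choose hP hs using hs
  choose hLA hAO hxA hxO using hP
  choose hsub hdead hAL W hW using hs
  have hanti : Antitone fun m => ρ.comp (s m).A (s m).subset := antitone_nat_of_succ_le hsub
  have hx : ∀ m, (s m).x ≠ (s (m + 1)).x := fun m h => hdead m _ (hxO m) (h ▸ hxA (m + 1))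
  have hfin' := ρ.eventually_notMem_support (fun m => (s m).A) (fun m => (s m).subset) hanti W
    (fun m z hz => (hW m z hz).1) fun m z hz => hdead (m + 1) z (hW m z hz).2
  refine ρ.exists_rayDirection_eq_of_walks W hx hfin' fun F hF => ?_
  obtain ⟨m, hm⟩ := ρ.exists_comp_disjoint_of_inter_subset (fun m => (s m).A) _ hanti
    (fun m => (hAL m).trans (hLA 0)) (hxA 0) ⟨1, hdead 0 _ (hxO 0)⟩ F
  have hmF := ρ.comp_subset_of_disjoint (hS := hF) hm
  exact eventually_atTop.2 ⟨m, fun j hj z hz => hmF (hanti hj (hW j z hz).1)⟩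

end UDirection

end Stages

section RhoMap

variable {V : Type*} (G : SimpleGraph V) (U : Set V)

theorem rhoMap_injective : Function.Injective (rhoMap G U) := by
  rintro ⟨r⟩ ⟨r'⟩ h
  exact Quot.sound fun F hF =>
    rayDirection_comp_eq_iff.1 (congrArg (fun ρ : UDirection G U => ρ.comp F hF) h)

theorem rhoMap_surjective (hbd : timidBoundary G U ⊆ U) : Function.Surjective (rhoMap G U) := by
  intro ρ
  suffices h : ∃ r : GraphRay G, rayDirection G U r = ρ by
    obtain ⟨r, hr⟩ := h
    exact ⟨Quot.mk _ r, hr⟩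
  by_cases hA : ∃ x ∉ U, ρ.DominatedBy x
  · obtain ⟨x, hxU, hx⟩ := hA
    exact ρ.exists_rayDirection_eq_of_dominatedBy_notMem hbd hxU hx
  have hD : ∀ x, ρ.DominatedBy x → x ∈ U := fun x hx => by_contra fun hxU => hA ⟨x, hxU, hx⟩
  rcases Set.finite_or_infinite {x | ρ.DominatedBy x} with hfin | hinf
  · exact ρ.exists_rayDirection_eq_of_finite_dominatedBy hD hfin
  · exact ρ.exists_rayDirection_eq_of_infinite_dominatedBy hD hinf

theorem rhoMap_preimage_comp_eq (F : Finset V) (hF : (F : Set V) ⊆ U) (ε : OmegaU G U) :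
    rhoMap G U ⁻¹' {ρ | ρ.comp F hF = (rhoMap G U ε).comp F hF} = uBasic G U F ε := by
  induction ε using Quot.ind with | mk r =>
  ext ξ
  induction ξ using Quot.ind with | mk r' =>
  constructor
  · exact fun h => ⟨r, r', rfl, rfl, rayDirection_comp_eq_iff.1 h.symm⟩
  · rintro ⟨r₁, r₁', h₁, h₁', htc⟩
    show (rhoMap G U (Quot.mk _ r')).comp F hF = (rhoMap G U (Quot.mk _ r)).comp F hF
    rw [← h₁, ← h₁']
    exact (rayDirection_comp_eq_iff.2 htc).symm

theorem isInducing_rhoMap (hbd : timidBoundary G U ⊆ U) : Topology.IsInducing (rhoMap G U) := by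
  refine ⟨(congrArg TopologicalSpace.generateFrom ?_).trans induced_generateFrom_eq.symm⟩
  ext S
  constructor
  · rintro ⟨F, hF, ε, rfl⟩
    exact ⟨_, ⟨F, hF, rhoMap G U ε, rfl⟩, rhoMap_preimage_comp_eq G U F hF ε⟩
  · rintro ⟨_, ⟨F, hF, ρ, rfl⟩, rfl⟩
    obtain ⟨ε, rfl⟩ := rhoMap_surjective G U hbd ρ
    exact ⟨F, hF, ε, rhoMap_preimage_comp_eq G U F hF ε⟩

end RhoMap

/-- If `∂t_U ⊆ U`, then `ρ_• : Ω_U(G) → D_U(G)` is a homeomorphism. -/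
theorem rhoMap_isHomeomorph_of_timidBoundary_subset {V : Type*}
    (G : SimpleGraph V) (U : Set V) (h : timidBoundary G U ⊆ U) :
    IsHomeomorph (rhoMap G U) :=
  isHomeomorph_iff_isEmbedding_surjective.2
    ⟨⟨isInducing_rhoMap G U h, rhoMap_injective G U⟩, rhoMap_surjective G U h⟩
end
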